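/- Let A₁, A₂, A₃ be symmetric positive semidefinite matrices with A₁ + A₂ + A₃ = I. Then the average over all permutations σ of {1,2,3} of (A_{σ(1)} - A_{σ(3)}) A_{σ(2)} (A_{σ(1)} - A_{σ(3)}) is at most (4/27)·I in the Loewner order. -/

import Mathlib

/-!
With `S` the permutation sum and `T = ∑ᵢ (3Aᵢ - 2) Aᵢ (3Aᵢ - 2)`, the constraint `A₀ + A₁ + A₂ = 1`
forces the noncommutative polynomial identity `3S + 2T = 2`, so that
`(4/27)·1 - S/6 = (1/27)·1 + T/9`. Each summand of `T` is a congruence `B Aᵢ B` of a positive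
semidefinite matrix by a symmetric one, hence positive semidefinite.
-/

open Matrix

theorem Equiv.Perm.sum_fin_three {M : Type*} [AddCommMonoid M] (f : Fin 3 → Fin 3 → Fin 3 → M) :
    ∑ σ : Equiv.Perm (Fin 3), f (σ 0) (σ 1) (σ 2) =
      f 0 1 2 + f 0 2 1 + f 1 0 2 + f 1 2 0 + f 2 0 1 + f 2 1 0 := by
  rw [show (Finset.univ : Finset (Equiv.Perm (Fin 3))) =
      {1, swap 1 2, swap 0 1, swap 0 1 * swap 1 2, swap 1 2 * swap 0 1, swap 0 2} by decide]
  rw [Finset.sum_insert (by decide), Finset.sum_insert (by decide), Finset.sum_insert (by decide),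
    Finset.sum_insert (by decide), Finset.sum_insert (by decide), Finset.sum_singleton]
  simp [swap_apply_def]
  abel

theorem three_mul_sum_perm_add_two_mul_sum_eq_two {R : Type*} [Ring R] (a : Fin 3 → R)
    (h : a 0 + a 1 + a 2 = 1) :
    3 * ∑ σ : Equiv.Perm (Fin 3), (a (σ 0) - a (σ 2)) * a (σ 1) * (a (σ 0) - a (σ 2)) +
      2 * ∑ i, (3 * a i - 2) * a i * (3 * a i - 2) = 2 := by
  have h2 : a 2 = 1 - a 0 - a 1 := by rw [← h]; abel
  rw [Equiv.Perm.sum_fin_three fun i j k => (a i - a k) * a j * (a i - a k), Fin.sum_univ_three,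
    h2]
  noncomm_ring
  norm_num

theorem smul_one_sub_smul_sum_perm_eq {𝕜 R : Type*} [Field 𝕜] [CharZero 𝕜] [Ring R]
    [Algebra 𝕜 R] (a : Fin 3 → R) (h : a 0 + a 1 + a 2 = 1) :
    (4 / 27 : 𝕜) • (1 : R) -
        (1 / 6 : 𝕜) • ∑ σ : Equiv.Perm (Fin 3), (a (σ 0) - a (σ 2)) * a (σ 1) * (a (σ 0) - a (σ 2)) =
      (1 / 27 : 𝕜) • (1 : R) + (1 / 9 : 𝕜) • ∑ i, (3 * a i - 2) * a i * (3 * a i - 2) := by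
  have key := three_mul_sum_perm_add_two_mul_sum_eq_two a h
  set S := ∑ σ : Equiv.Perm (Fin 3), (a (σ 0) - a (σ 2)) * a (σ 1) * (a (σ 0) - a (σ 2))
  set T := ∑ i, (3 * a i - 2) * a i * (3 * a i - 2)
  replace key : (3 : 𝕜) • S + (2 : 𝕜) • T = (2 : 𝕜) • 1 := by
    simpa only [Algebra.smul_def, map_ofNat, mul_one] using key
  linear_combination (norm := module) (-1 / 18 : 𝕜) • key

theorem IsSelfAdjoint.ofNat_mul_sub_ofNat {R : Type*} [Ring R] [StarRing R] {x : R}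
    (hx : IsSelfAdjoint x) (m n : ℕ) [m.AtLeastTwo] [n.AtLeastTwo] :
    IsSelfAdjoint ((ofNat(m) : R) * x - ofNat(n)) :=
  (((IsSelfAdjoint.ofNat m).commute_iff hx).mp (Commute.ofNat_left m x)).sub (.ofNat n)

theorem Matrix.PosSemidef.mul_mul_self_of_isHermitian {n R : Type*} [Fintype n] [Ring R]
    [PartialOrder R] [StarRing R] {A B : Matrix n n R} (hA : A.PosSemidef) (hB : B.IsHermitian) :
    (B * A * B).PosSemidef := by
  simpa only [hB.eq] using hA.conjTranspose_mul_mul_same B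

theorem stmt12 {n : ℕ} (A : Fin 3 → Matrix (Fin n) (Fin n) ℝ)
    (hA : ∀ i, (A i).PosSemidef)
    (hsum : A 0 + A 1 + A 2 = (1 : Matrix (Fin n) (Fin n) ℝ)) :
    ((4 / 27 : ℝ) • (1 : Matrix (Fin n) (Fin n) ℝ) -
      (1 / 6 : ℝ) • ∑ σ : Equiv.Perm (Fin 3),
        (A (σ 0) - A (σ 2)) * A (σ 1) * (A (σ 0) - A (σ 2))).PosSemidef := by
  have hT : (∑ i, (3 * A i - 2) * A i * (3 * A i - 2)).PosSemidef :=
    posSemidef_sum _ fun i _ =>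
      (hA i).mul_mul_self_of_isHermitian (IsSelfAdjoint.ofNat_mul_sub_ofNat (hA i).isHermitian 3 2)
  rw [smul_one_sub_smul_sum_perm_eq A hsum]
  exact (PosSemidef.one.smul (by norm_num)).add (hT.smul (by norm_num))
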